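/- Let n ≥ 1, let ρ_i be a d_i-dimensional quantum state for each i ∈ Fin n, let ϱ be the product state on K = Π i, Fin (d i), and let X be a Hermitian matrix on K with Efron–Stein decomposition X = ∑_{J ⊆ Fin n} X^{=J}. Then Var_ϱ[X] = ∑_{J ⊆ Fin n, J ≠ ∅} Re(Tr[ϱ·(X^{=J})²]). -/

import Mathlib

/-!
Write `φ(M) = Tr[ϱ M]`. Each marginalization `E_i` preserves `φ`, is idempotent, the `E_i`
commute, and `E_i(A B) = A E_i(B)` whenever `E_i A = A` (and symmetrically on the right).
Hence `E_i` fixes `X^{=J}` for `i ∉ J` and kills it for `i ∈ J`, so for `J ≠ J'` some `E_i`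
fixes one factor and kills the other, and `φ(X^{=J} X^{=J'}) = φ(E_i(X^{=J} X^{=J'})) = 0`.
Expanding `X = ∑_J X^{=J}` therefore gives `φ(X²) = ∑_J φ((X^{=J})²)`. The part
`X^{=∅} = (∏_i E_i) X` is fixed by every `E_i`, hence a scalar, namely `φ(X) • 1`, which
contributes `φ(X)²`; this is real because `ϱ` and `X` are Hermitian.
-/

open scoped BigOperators ComplexOrder

noncomputable section

/-- A `d`-dimensional quantum state: positive semidefinite with trace 1. -/
def IsState {d : ℕ} (ρ : Matrix (Fin d) (Fin d) ℂ) : Prop :=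
  ρ.PosSemidef ∧ ρ.trace = 1

/-- The product state `ρ₁ ⊗ ⋯ ⊗ ρ_n` on `K = Π i, Fin (dim i)`. -/
def prodState {n : ℕ} {dim : Fin n → ℕ}
    (ρ : ∀ i, Matrix (Fin (dim i)) (Fin (dim i)) ℂ) :
    Matrix (∀ j, Fin (dim j)) (∀ j, Fin (dim j)) ℂ :=
  fun a b => ∏ i, ρ i (a i) (b i)

/-- Variance of the observable `X` in the state `ϱ`. -/
def qVar {K : Type*} [Fintype K] (ϱ X : Matrix K K ℂ) : ℝ :=
  ((ϱ * (X * X)).trace).re - (((ϱ * X).trace).re) ^ 2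

/-- Marginalization of the `i`-th component: `E_i X = Tr_i[ρ_i X] ⊗ Id_i`. -/
def Emap {n : ℕ} {dim : Fin n → ℕ}
    (ρ : ∀ i, Matrix (Fin (dim i)) (Fin (dim i)) ℂ) (i : Fin n)
    (X : Matrix (∀ j, Fin (dim j)) (∀ j, Fin (dim j)) ℂ) :
    Matrix (∀ j, Fin (dim j)) (∀ j, Fin (dim j)) ℂ :=
  fun a b =>
    if a i = b i then
      ∑ e, ∑ c, ρ i e c * X (Function.update a i c) (Function.update b i e)
    else 0

/-- The product `∏_{i ∈ S} E_i` (the maps `E_i` commute, so applying them in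
increasing order of the indices realizes this product). -/
def EProd {n : ℕ} {dim : Fin n → ℕ}
    (ρ : ∀ i, Matrix (Fin (dim i)) (Fin (dim i)) ℂ) (S : Finset (Fin n))
    (X : Matrix (∀ j, Fin (dim j)) (∀ j, Fin (dim j)) ℂ) :
    Matrix (∀ j, Fin (dim j)) (∀ j, Fin (dim j)) ℂ :=
  (S.sort (· ≤ ·)).foldr (fun i Y => Emap ρ i Y) X

/-- The Efron–Stein part `X^{=J} = ∑_{I ⊆ J} (-1)^{|J| - |I|} (∏_{i ∉ I} E_i) X`. -/
def ESpart {n : ℕ} {dim : Fin n → ℕ}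
    (ρ : ∀ i, Matrix (Fin (dim i)) (Fin (dim i)) ℂ)
    (X : Matrix (∀ j, Fin (dim j)) (∀ j, Fin (dim j)) ℂ)
    (J : Finset (Fin n)) :
    Matrix (∀ j, Fin (dim j)) (∀ j, Fin (dim j)) ℂ :=
  ∑ I ∈ J.powerset, ((-1 : ℂ) ^ (J.card - I.card)) • EProd ρ Iᶜ X


open Finset Function
open scoped Matrix

section PiUpdate

variable {ι : Type*} [Fintype ι] [DecidableEq ι] {β : ι → Type*} {M : Type*}
  [AddCommMonoid M]

theorem sum_sum_update_swap [∀ i, Fintype (β i)] (i : ι) (g : (∀ j, β j) → β i → M) :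
    ∑ a, ∑ x, g (update a i x) (a i) = ∑ a, ∑ x, g a x := by
  have hinv : Involutive fun p : (∀ j, β j) × β i => (update p.1 i p.2, p.1 i) := by
    rintro ⟨a, x⟩
    simp
  simp only [← Fintype.sum_prod_type']
  exact Equiv.sum_comp hinv.toPerm (fun p => g p.1 p.2)

theorem sum_ite_apply_eq_sum_ite_update [∀ i, Fintype (β i)] [∀ i, DecidableEq (β i)] (i : ι)
    (x y : β i) (g : (∀ j, β j) → M) :
    ∑ a, (if a i = x then g a else 0) = ∑ a, (if a i = y then g (update a i x) else 0) := by
  have := sum_sum_update_swap i fun a z => if z = y then (if a i = x then g a else 0) else 0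
  simp only [update_self, sum_ite_eq', mem_univ, if_true] at this
  rw [← this]
  refine sum_congr rfl fun a _ => ?_
  split_ifs <;> simp_all

theorem apply_eq_of_forall_update_eq {γ : Type*} (f : (∀ j, β j) → γ)
    (hf : ∀ a i (x : β i), f (update a i x) = f a) (a b : ∀ j, β j) : f a = f b := by
  suffices ∀ s : Finset ι, f (s.piecewise b a) = f a by
    simpa using (this univ).symm
  intro s
  induction s using Finset.induction with
  | empty => simp
  | insert i s _ ih => rw [Finset.piecewise_insert, hf, ih]

end PiUpdate

section Moebius

variable {α M : Type*} [AddCommGroup M]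

def moebiusSum (f : Finset α → M) (J : Finset α) : M :=
  ∑ I ∈ J.powerset, (-1 : ℤ) ^ (J.card - I.card) • f I

theorem moebiusSum_insert [DecidableEq α] {a : α} {J : Finset α} (ha : a ∉ J)
    (f : Finset α → M) :
    moebiusSum f (insert a J) = moebiusSum (fun I => f (insert a I)) J - moebiusSum f J := by
  rw [moebiusSum, sum_powerset_insert ha, moebiusSum, moebiusSum, sub_eq_neg_add,
    ← sum_neg_distrib]
  congr 1 <;> refine sum_congr rfl fun I hI => ?_
  · have hIJ := card_le_card (mem_powerset.1 hI)
    rw [card_insert_of_notMem ha, Nat.sub_add_comm hIJ, pow_succ, mul_neg_one, neg_smul]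
  · have haI : a ∉ I := fun h => ha (mem_powerset.1 hI h)
    rw [card_insert_of_notMem ha, card_insert_of_notMem haI, Nat.add_sub_add_right]

theorem sum_moebiusSum [DecidableEq α] (f : Finset α → M) (s : Finset α) :
    ∑ J ∈ s.powerset, moebiusSum f J = f s := by
  induction s using Finset.induction generalizing f with
  | empty => simp [moebiusSum]
  | insert a s ha ih =>
    have haJ : ∀ J ∈ s.powerset, a ∉ J := fun J hJ h => ha (mem_powerset.1 hJ h)
    rw [sum_powerset_insert ha, sum_congr rfl fun J hJ => moebiusSum_insert (haJ J hJ) f,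
      sum_sub_distrib, add_sub_cancel, ih]

theorem map_moebiusSum {N F : Type*} [AddCommGroup N] [FunLike F M N] [AddMonoidHomClass F M N]
    (φ : F) (f : Finset α → M) (J : Finset α) :
    φ (moebiusSum f J) = moebiusSum (fun I => φ (f I)) J := by
  simp only [moebiusSum, map_sum, map_zsmul]

end Moebius

theorem Matrix.trace_mul_sum_mul_sum_of_pairwise {ι K R : Type*} [Fintype K]
    [NonUnitalNonAssocSemiring R] (ϱ : Matrix K K R) (s : Finset ι) (Y : ι → Matrix K K R)
    (h : ∀ j ∈ s, ∀ k ∈ s, j ≠ k → (ϱ * (Y j * Y k)).trace = 0) :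
    (ϱ * ((∑ j ∈ s, Y j) * ∑ k ∈ s, Y k)).trace = ∑ j ∈ s, (ϱ * (Y j * Y j)).trace := by
  simp only [Matrix.sum_mul, Matrix.mul_sum, Matrix.trace_sum]
  exact sum_congr rfl fun j hj =>
    sum_eq_single j (fun k hk hkj => h k hk j hj hkj) fun hj' => absurd hj hj'

theorem Matrix.IsHermitian.im_trace_mul {K : Type*} [Fintype K] {A B : Matrix K K ℂ}
    (hA : A.IsHermitian) (hB : B.IsHermitian) : (A * B).trace.im = 0 :=
  Complex.conj_eq_iff_im.1 <| by
    rw [← Complex.star_def, ← Matrix.trace_conjTranspose, Matrix.conjTranspose_mul, hA.eq, hB.eq,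
      Matrix.trace_mul_comm]

abbrev ProdMatrix {n : ℕ} (dim : Fin n → ℕ) :=
  Matrix (∀ j, Fin (dim j)) (∀ j, Fin (dim j)) ℂ

section Marginal

variable {n : ℕ} {dim : Fin n → ℕ} (ρ : ∀ i, Matrix (Fin (dim i)) (Fin (dim i)) ℂ)

def Emap.linearMap (i : Fin n) : ProdMatrix dim →ₗ[ℂ] ProdMatrix dim where
  toFun := Emap ρ i
  map_add' A B := by
    ext a b
    simp only [Emap, Matrix.add_apply, mul_add, sum_add_distrib]
    split_ifs <;> simp
  map_smul' z A := by
    ext a b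
    simp only [Emap, Matrix.smul_apply, smul_eq_mul, RingHom.id_apply]
    split_ifs <;> simp [mul_sum, mul_left_comm z]

theorem Emap.linearMap_apply (i : Fin n) (A : ProdMatrix dim) :
    Emap.linearMap ρ i A = Emap ρ i A :=
  rfl

theorem Emap_comm (i j : Fin n) (A : ProdMatrix dim) :
    Emap ρ i (Emap ρ j A) = Emap ρ j (Emap ρ i A) := by
  rcases eq_or_ne i j with rfl | hij
  · rfl
  ext a b
  simp only [Emap, update_of_ne hij, update_of_ne hij.symm, update_comm hij]
  split_ifs <;> simp only [mul_sum, mul_zero, sum_const_zero, mul_left_comm (ρ i _ _)]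
  simp only [← Fintype.sum_prod_type']
  exact Fintype.sum_equiv ((Equiv.prodAssoc _ _ _).symm.trans
    ((Equiv.prodComm _ _).trans (Equiv.prodAssoc _ _ _))) _ _ fun _ => rfl

theorem Emap_idem {i : Fin n} (hρ : (ρ i).trace = 1) (A : ProdMatrix dim) :
    Emap ρ i (Emap ρ i A) = Emap ρ i A := by
  ext a b
  simp only [Emap, update_self, update_idem]
  split_ifs with hab
  · simp only [mul_ite, mul_zero, sum_ite_eq', mem_univ, if_true, ← sum_mul]
    rw [show ∑ e, ρ i e e = 1 from hρ, one_mul]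
  · rfl

theorem apply_update_eq_of_Emap_eq_self {i : Fin n} {A : ProdMatrix dim} (hA : Emap ρ i A = A)
    (a k : ∀ j, Fin (dim j)) (x : Fin (dim i)) :
    A (update a i x) k = if k i = x then A a (update k i (a i)) else 0 := by
  rw [← hA]
  simp [Emap, update_idem, eq_comm]

theorem apply_eq_zero_of_Emap_eq_self {i : Fin n} {A : ProdMatrix dim} (hA : Emap ρ i A = A)
    {a k : ∀ j, Fin (dim j)} (hak : a i ≠ k i) : A a k = 0 := by
  rw [← hA]
  simp [Emap, hak]

theorem Emap_mul_eq_mul_Emap {i : Fin n} {A : ProdMatrix dim} (hA : Emap ρ i A = A)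
    (B : ProdMatrix dim) : Emap ρ i (A * B) = A * Emap ρ i B := by
  have hA0 : ∀ {a k : ∀ j, Fin (dim j)}, k i ≠ a i → A a k = 0 := fun h =>
    apply_eq_zero_of_Emap_eq_self ρ hA (Ne.symm h)
  ext a b
  simp only [Emap, Matrix.mul_apply, apply_update_eq_of_Emap_eq_self ρ hA, ite_mul, zero_mul]
  split_ifs with hab
  · have hslice : ∀ b' (c : Fin (dim i)),
        ∑ k, (if k i = c then A a (update k i (a i)) * B k b' else 0) =
          ∑ k, A a k * B (update k i c) b' := by
      intro b' c
      rw [sum_ite_apply_eq_sum_ite_update (β := fun j => Fin (dim j)) i c (a i)]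
      refine sum_congr rfl fun k _ => ?_
      split_ifs with hk
      · rw [update_idem, ← hk, update_eq_self]
      · rw [hA0 hk, zero_mul]
    have hdrop : ∀ k (z : ℂ), A a k * (if k i = b i then z else 0) = A a k * z := by
      intro k z
      split_ifs with hk
      · rfl
      · rw [hA0 (hab ▸ hk), zero_mul, zero_mul]
    simp only [hslice, hdrop, mul_sum]
    conv_rhs => rw [sum_comm]
    refine sum_congr rfl fun e _ => ?_
    rw [sum_comm]
    simp only [mul_left_comm]
  · refine (sum_eq_zero fun k _ => ?_).symm
    split_ifs with hkb
    · rw [apply_eq_zero_of_Emap_eq_self ρ hA (hkb ▸ hab), zero_mul]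
    · exact mul_zero _

theorem Emap_conjTranspose {i : Fin n} (hρ : (ρ i).IsHermitian) (A : ProdMatrix dim) :
    (Emap ρ i A)ᴴ = Emap ρ i Aᴴ := by
  ext a b
  simp only [Emap, Matrix.conjTranspose_apply, eq_comm (a := b i)]
  split_ifs
  · simp only [star_sum, star_mul', hρ.apply]
    exact sum_comm
  · exact star_zero _

theorem Emap_mul_eq_Emap_mul {i : Fin n} (hρ : (ρ i).IsHermitian) {B : ProdMatrix dim}
    (hB : Emap ρ i B = B) (A : ProdMatrix dim) : Emap ρ i (A * B) = Emap ρ i A * B := by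
  have hB_star : Emap ρ i Bᴴ = Bᴴ := by rw [← Emap_conjTranspose ρ hρ, hB]
  rw [← Matrix.conjTranspose_conjTranspose (Emap ρ i (A * B)), Emap_conjTranspose ρ hρ,
    Matrix.conjTranspose_mul, Emap_mul_eq_mul_Emap ρ hB_star, Matrix.conjTranspose_mul,
    Emap_conjTranspose ρ hρ, Matrix.conjTranspose_conjTranspose,
    Matrix.conjTranspose_conjTranspose]

theorem trace_prodState (hρ : ∀ i, (ρ i).trace = 1) : (prodState ρ).trace = 1 := by
  simp only [Matrix.trace, Matrix.diag, prodState]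
  exact (Fintype.prod_sum fun i x => ρ i x x).symm.trans (prod_eq_one fun i _ => hρ i)

theorem prodState_isHermitian (hρ : ∀ i, (ρ i).IsHermitian) : (prodState ρ).IsHermitian := by
  ext a b
  simp only [Matrix.conjTranspose_apply, prodState, star_prod, (hρ _).apply]

theorem prodState_apply_eq_mul_prod_erase (i : Fin n) (a b : ∀ j, Fin (dim j)) :
    prodState ρ a b = ρ i (a i) (b i) * ∏ j ∈ univ.erase i, ρ j (a j) (b j) :=
  (mul_prod_erase _ _ (mem_univ i)).symm

/-- Substituting `a ↦ update a i e`, `b ↦ update b i c` (an involution on each pair) turns the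
marginalized double sum back into the original one, times `Tr ρ_i`. -/
theorem trace_prodState_mul_Emap {i : Fin n} (hρ : (ρ i).trace = 1) (M : ProdMatrix dim) :
    (prodState ρ * Emap ρ i M).trace = (prodState ρ * M).trace := by
  set R : (∀ j, Fin (dim j)) → (∀ j, Fin (dim j)) → ℂ := fun a b =>
    ∏ j ∈ univ.erase i, ρ j (a j) (b j)
  have hR : ∀ a b x y, R (update a i x) (update b i y) = R a b := fun a b x y =>
    prod_congr rfl fun j hj => by
      rw [update_of_ne (ne_of_mem_erase hj), update_of_ne (ne_of_mem_erase hj)]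
  set T : (∀ j, Fin (dim j)) → Fin (dim i) → (∀ j, Fin (dim j)) → Fin (dim i) → ℂ :=
    fun a y b z => if z = y then ρ i y z * (R a b * (ρ i (a i) (b i) * M b a)) else 0
  calc (prodState ρ * Emap ρ i M).trace
      = ∑ a, ∑ e, ∑ b, ∑ c, T (update a i e) (a i) (update b i c) (b i) := by
        simp only [Matrix.trace, Matrix.diag, Matrix.mul_apply]
        refine sum_congr rfl fun a _ => ?_
        rw [sum_comm]
        refine sum_congr rfl fun b _ => ?_
        simp only [Emap, prodState_apply_eq_mul_prod_erase ρ i, T, hR, update_self]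
        split_ifs <;> simp [mul_sum, R, mul_assoc]
    _ = ∑ a, ∑ y, ∑ b, ∑ z, T a y b z := by
        have hb : ∀ a' y, ∑ b, ∑ c, T a' y (update b i c) (b i) = ∑ b, ∑ z, T a' y b z :=
          fun a' y => sum_sum_update_swap i (T a' y)
        simp only [hb]
        exact sum_sum_update_swap i fun a y => ∑ b, ∑ z, T a y b z
    _ = (prodState ρ * M).trace := by
        simp only [T, Matrix.trace, Matrix.diag, Matrix.mul_apply, sum_ite_eq', mem_univ, if_true]
        refine sum_congr rfl fun a _ => ?_
        rw [sum_comm]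
        refine sum_congr rfl fun b _ => ?_
        rw [← sum_mul, show ∑ y, ρ i y y = 1 from hρ, one_mul,
          prodState_apply_eq_mul_prod_erase ρ i]
        ring

theorem EProd_empty (X : ProdMatrix dim) : EProd ρ ∅ X = X := by
  simp [EProd]

theorem EProd_insert {i : Fin n} {S : Finset (Fin n)} (hi : i ∉ S) (X : ProdMatrix dim) :
    EProd ρ (insert i S) X = Emap ρ i (EProd ρ S X) := by
  have : LeftCommutative fun i (Y : ProdMatrix dim) => Emap ρ i Y := ⟨Emap_comm ρ⟩
  exact ((sort_perm_toList _ _).trans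
    ((toList_insert hi).trans ((sort_perm_toList _ _).symm.cons i))).foldr_eq X

theorem Emap_EProd {i : Fin n} (hρ : (ρ i).trace = 1) (S : Finset (Fin n)) (X : ProdMatrix dim) :
    Emap ρ i (EProd ρ S X) = EProd ρ (insert i S) X := by
  by_cases hi : i ∈ S
  · rw [insert_eq_of_mem hi, ← insert_erase hi, EProd_insert ρ (notMem_erase i S),
      Emap_idem ρ hρ]
  · rw [EProd_insert ρ hi]

theorem trace_prodState_mul_EProd (hρ : ∀ i, (ρ i).trace = 1) (S : Finset (Fin n))
    (X : ProdMatrix dim) : (prodState ρ * EProd ρ S X).trace = (prodState ρ * X).trace := by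
  induction S using Finset.induction with
  | empty => rw [EProd_empty]
  | insert i S hi ih => rw [EProd_insert ρ hi, trace_prodState_mul_Emap ρ (hρ i), ih]

theorem exists_eq_smul_one_of_forall_Emap_eq {M : ProdMatrix dim} (hM : ∀ i, Emap ρ i M = M) :
    ∃ c : ℂ, M = c • 1 := by
  rcases isEmpty_or_nonempty (∀ j, Fin (dim j)) with hK | hK
  · exact ⟨0, Subsingleton.elim _ _⟩
  obtain ⟨a₀⟩ := hK
  refine ⟨M a₀ a₀, Matrix.ext fun a b => ?_⟩
  by_cases hab : a = b
  · subst hab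
    rw [Matrix.smul_apply, Matrix.one_apply_eq, smul_eq_mul, mul_one]
    refine apply_eq_of_forall_update_eq (fun v => M v v) (fun v i x => ?_) a a₀
    simp [apply_update_eq_of_Emap_eq_self ρ (hM i)]
  · obtain ⟨i, hi⟩ := Function.ne_iff.1 hab
    rw [apply_eq_zero_of_Emap_eq_self ρ (hM i) hi, Matrix.smul_apply, Matrix.one_apply_ne hab,
      smul_zero]

theorem EProd_univ_eq_smul_one (hρ : ∀ i, (ρ i).trace = 1) (X : ProdMatrix dim) :
    EProd ρ univ X = (prodState ρ * X).trace • 1 := by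
  obtain ⟨c, hc⟩ := exists_eq_smul_one_of_forall_Emap_eq ρ fun i => by
    rw [Emap_EProd ρ (hρ i), insert_eq_of_mem (mem_univ i)]
  rw [← trace_prodState_mul_EProd ρ hρ univ X, hc, Matrix.mul_smul, Matrix.mul_one,
    Matrix.trace_smul, trace_prodState ρ hρ, smul_eq_mul, mul_one]

theorem ESpart_eq_moebiusSum (X : ProdMatrix dim) (J : Finset (Fin n)) :
    ESpart ρ X J = moebiusSum (fun I => EProd ρ Iᶜ X) J :=
  sum_congr rfl fun I _ => by rw [← Int.cast_smul_eq_zsmul ℂ]; push_cast; rfl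

theorem sum_ESpart (X : ProdMatrix dim) : ∑ J, ESpart ρ X J = X := by
  simp only [ESpart_eq_moebiusSum]
  rw [← powerset_univ, sum_moebiusSum, compl_univ, EProd_empty]

theorem ESpart_empty (X : ProdMatrix dim) : ESpart ρ X ∅ = EProd ρ univ X := by
  simp [ESpart]

theorem Emap_ESpart_of_notMem {i : Fin n} (hρ : (ρ i).trace = 1) {J : Finset (Fin n)}
    (hi : i ∉ J) (X : ProdMatrix dim) : Emap ρ i (ESpart ρ X J) = ESpart ρ X J := by
  rw [ESpart, ← Emap.linearMap_apply, map_sum]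
  refine sum_congr rfl fun I hI => ?_
  rw [map_smul, Emap.linearMap_apply, Emap_EProd ρ hρ,
    insert_eq_of_mem (mem_compl.2 fun h => hi (mem_powerset.1 hI h))]

theorem Emap_ESpart_of_mem {i : Fin n} (hρ : (ρ i).trace = 1) {J : Finset (Fin n)}
    (hi : i ∈ J) (X : ProdMatrix dim) : Emap ρ i (ESpart ρ X J) = 0 := by
  rw [ESpart_eq_moebiusSum, ← insert_erase hi, moebiusSum_insert (notMem_erase i J),
    ← Emap.linearMap_apply, map_sub, map_moebiusSum, map_moebiusSum, sub_eq_zero]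
  congr 1
  funext I
  simp only [Emap.linearMap_apply, Emap_EProd ρ hρ]
  congr 1
  ext j
  simp only [mem_insert, mem_compl]
  tauto

theorem trace_prodState_mul_ESpart_mul_ESpart_of_ne (hρ : ∀ i, (ρ i).trace = 1)
    (hρh : ∀ i, (ρ i).IsHermitian) (X : ProdMatrix dim) {J J' : Finset (Fin n)} (h : J ≠ J') :
    (prodState ρ * (ESpart ρ X J * ESpart ρ X J')).trace = 0 := by
  obtain ⟨i, hi⟩ : ∃ i, ¬(i ∈ J ↔ i ∈ J') := by
    contrapose! h
    exact ext h
  rw [← trace_prodState_mul_Emap ρ (hρ i)]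
  by_cases hiJ : i ∈ J
  · rw [Emap_mul_eq_Emap_mul ρ (hρh i) (Emap_ESpart_of_notMem ρ (hρ i) (by tauto) X),
      Emap_ESpart_of_mem ρ (hρ i) hiJ, Matrix.zero_mul, Matrix.mul_zero, Matrix.trace_zero]
  · rw [Emap_mul_eq_mul_Emap ρ (Emap_ESpart_of_notMem ρ (hρ i) hiJ X),
      Emap_ESpart_of_mem ρ (hρ i) (by tauto), Matrix.mul_zero, Matrix.mul_zero, Matrix.trace_zero]

theorem trace_prodState_mul_ESpart_empty_mul_self (hρ : ∀ i, (ρ i).trace = 1)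
    (X : ProdMatrix dim) :
    (prodState ρ * (ESpart ρ X ∅ * ESpart ρ X ∅)).trace = (prodState ρ * X).trace ^ 2 := by
  rw [ESpart_empty, EProd_univ_eq_smul_one ρ hρ, smul_mul_smul_comm, Matrix.one_mul,
    Matrix.mul_smul, Matrix.mul_one, Matrix.trace_smul, trace_prodState ρ hρ, smul_eq_mul,
    mul_one, sq]

end Marginal

theorem quantum_efron_stein_variance_decomposition_general (n : ℕ)
    (dim : Fin n → ℕ)
    (ρ : ∀ i, Matrix (Fin (dim i)) (Fin (dim i)) ℂ)
    (hρ : ∀ i, IsState (ρ i))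
    (X : Matrix (∀ j, Fin (dim j)) (∀ j, Fin (dim j)) ℂ) (hX : X.IsHermitian) :
    qVar (prodState ρ) X =
      ∑ J ∈ Finset.univ \ {(∅ : Finset (Fin n))},
        ((prodState ρ * (ESpart ρ X J * ESpart ρ X J)).trace).re := by
  have htr : ∀ i, (ρ i).trace = 1 := fun i => (hρ i).2
  have hherm : ∀ i, (ρ i).IsHermitian := fun i => (hρ i).1.isHermitian
  have hsq : (prodState ρ * (X * X)).trace =
      ∑ J, (prodState ρ * (ESpart ρ X J * ESpart ρ X J)).trace := by
    conv_lhs => rw [← sum_ESpart ρ X]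
    exact Matrix.trace_mul_sum_mul_sum_of_pairwise _ _ _ fun J _ J' _ h =>
      trace_prodState_mul_ESpart_mul_ESpart_of_ne ρ htr hherm X h
  have hreal := (prodState_isHermitian ρ hherm).im_trace_mul hX
  rw [qVar, hsq, ← add_sum_erase _ _ (mem_univ ∅),
    trace_prodState_mul_ESpart_empty_mul_self ρ htr, sdiff_singleton_eq_erase, Complex.add_re,
    Complex.re_sum, sq, Complex.mul_re, hreal]
  ring

/-- The variance of an observable is the sum of the weights of the nonempty
Efron–Stein parts. -/
theorem quantum_efron_stein_variance_decomposition (n : ℕ) (hn : 1 ≤ n)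
    (dim : Fin n → ℕ)
    (ρ : ∀ i, Matrix (Fin (dim i)) (Fin (dim i)) ℂ)
    (hρ : ∀ i, IsState (ρ i))
    (X : Matrix (∀ j, Fin (dim j)) (∀ j, Fin (dim j)) ℂ) (hX : X.IsHermitian) :
    qVar (prodState ρ) X =
      ∑ J ∈ Finset.univ \ {(∅ : Finset (Fin n))},
        ((prodState ρ * (ESpart ρ X J * ESpart ρ X J)).trace).re :=
  quantum_efron_stein_variance_decomposition_general n dim ρ hρ X hX
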